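/- arXiv:2402.13139 — 4 statements merged into one kernel-verified Lean document; each statement's English description precedes it below -/
import Mathlib

section
/- Let G be a finite simple graph with at least one edge in which every vertex has degree at most Δmax, let t ≥ 1 be an integer, let η ≥ 0, and let c be an edge colouring of G with colours {1,…,t} satisfying the local invariant: for every edge xy and every colour i ∈ {1,…,t}, s_{c(xy)}(x) + s_{c(xy)}(y) ≤ η + s_i(x) + s_i(y). Let L̃ be the maximum over all edges xy of s_{c(xy)}(x) + s_{c(xy)}(y), and let uv be an edge attaining this maximum. Then there exist colours κx, κy ∈ {1,…,t} such that, defining the vertex sets X_1 = {u}, Y_i = N_{κx}(X_i) \ X_i, and X_{i+1} = N_{κy}(Y_i) \ Y_i for all i ≥ 1, the following holds for all i ≥ 1: every x ∈ X_i satisfies s_{κx}(x) − s_{κy}(x) ≥ L̃ − (1 + 2(i−1))·η, and every y ∈ Y_i satisfies s_{κy}(y) − s_{κx}(y) ≥ L̃ − 2i·η. -/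
open Finset

/-- The number of edges of colour `i` incident to the vertex `v`
(in a simple graph, with an edge colouring `c`, not necessarily proper). -/
def colDeg {V : Type*} [Fintype V] [DecidableEq V] (G : SimpleGraph V) [DecidableRel G.Adj]
    (c : Sym2 V → ℕ) (i : ℕ) (v : V) : ℕ :=
  ((G.neighborFinset v).filter (fun u => c s(v, u) = i)).card

/-- The surplus `s_i(v) = max (d_i(v) - Δmax / t) 0` of colour `i` at the vertex `v`. -/
noncomputable def surplus {V : Type*} [Fintype V] [DecidableEq V] (G : SimpleGraph V)
    [DecidableRel G.Adj] (c : Sym2 V → ℕ) (Δmax t : ℕ) (i : ℕ) (v : V) : ℝ :=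
  max ((colDeg G c i v : ℝ) - (Δmax : ℝ) / (t : ℝ)) 0

/-- The set of vertices joined to some vertex of `S` by an edge of colour `κ`. -/
def colNbr {V : Type*} (G : SimpleGraph V) (c : Sym2 V → ℕ) (κ : ℕ) (S : Set V) : Set V :=
  {v | ∃ u ∈ S, G.Adj u v ∧ c s(u, v) = κ}

/-- Every vertex has some colour in `[1, t]` with zero surplus. -/
lemma exists_zero_surplus {V : Type*} [Fintype V] [DecidableEq V] (G : SimpleGraph V)
    [DecidableRel G.Adj] (c : Sym2 V → ℕ) (Δmax t : ℕ)
    (hdeg : ∀ v, G.degree v ≤ Δmax) (ht : 1 ≤ t)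
    (hcol : ∀ x y, G.Adj x y → c s(x, y) ∈ Finset.Icc 1 t) (v : V) :
    ∃ i ∈ Finset.Icc 1 t, surplus G c Δmax t i v = 0 := by
  by_contra h
  push_neg at h
  have key : ∀ i ∈ Finset.Icc 1 t, (Δmax : ℝ) / (t : ℝ) < (colDeg G c i v : ℝ) := by
    intro i hi
    by_contra h2
    push_neg at h2
    exact h i hi (by
      simp [surplus, max_eq_right (by linarith :
        (colDeg G c i v : ℝ) - (Δmax : ℝ) / (t : ℝ) ≤ 0)])
  have hsum : G.degree v = ∑ i ∈ Finset.Icc 1 t, colDeg G c i v := by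
    unfold colDeg
    rw [← SimpleGraph.card_neighborFinset_eq_degree]
    exact Finset.card_eq_sum_card_fiberwise
      (fun u hu => hcol v u ((SimpleGraph.mem_neighborFinset G v u).mp hu))
  have h2 : (∑ i ∈ Finset.Icc 1 t, (colDeg G c i v : ℝ)) ≤ (Δmax : ℝ) := by
    have : ∑ i ∈ Finset.Icc 1 t, colDeg G c i v ≤ Δmax := hsum ▸ hdeg v
    exact_mod_cast this
  have hne : (Finset.Icc 1 t).Nonempty := ⟨1, by simp [ht]⟩
  have h1 := Finset.sum_lt_sum_of_nonempty hne key
  have hcard : (Finset.Icc 1 t).card = t := by simp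
  rw [Finset.sum_const, hcard, nsmul_eq_mul] at h1
  have ht0 : (t : ℝ) ≠ 0 := by
    have : (0 : ℝ) < t := by exact_mod_cast Nat.lt_of_lt_of_le Nat.zero_lt_one ht
    linarith
  have htt : (t : ℝ) * ((Δmax : ℝ) / (t : ℝ)) = Δmax := by field_simp
  linarith

/-- Lemma `largeSurplus`: from an edge of maximum surplus one can extract two colours and
families of vertex sets, defined by alternately taking colour neighbourhoods, all of whose
vertices have large surplus differences. -/
theorem largeSurplusSets {V : Type*} [Fintype V] [DecidableEq V]
    (G : SimpleGraph V) [DecidableRel G.Adj]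
    (Δmax t : ℕ) (c : Sym2 V → ℕ) (η : ℝ)
    (hdeg : ∀ v, G.degree v ≤ Δmax)
    (ht : 1 ≤ t)
    (hη : 0 ≤ η)
    (hcol : ∀ x y, G.Adj x y → c s(x, y) ∈ Finset.Icc 1 t)
    (hinv : ∀ x y, G.Adj x y → ∀ i ∈ Finset.Icc 1 t,
      surplus G c Δmax t (c s(x, y)) x + surplus G c Δmax t (c s(x, y)) y
        ≤ η + surplus G c Δmax t i x + surplus G c Δmax t i y)
    (u v : V) (huv : G.Adj u v)
    (hmax : ∀ x y, G.Adj x y →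
      surplus G c Δmax t (c s(x, y)) x + surplus G c Δmax t (c s(x, y)) y
        ≤ surplus G c Δmax t (c s(u, v)) u + surplus G c Δmax t (c s(u, v)) v) :
    ∃ κx ∈ Finset.Icc 1 t, ∃ κy ∈ Finset.Icc 1 t, ∃ X Y : ℕ → Set V,
      X 1 = {u} ∧
      (∀ i, 1 ≤ i → Y i = colNbr G c κx (X i) \ X i) ∧
      (∀ i, 1 ≤ i → X (i + 1) = colNbr G c κy (Y i) \ Y i) ∧
      (∀ i, 1 ≤ i → ∀ x ∈ X i,
        surplus G c Δmax t κx x - surplus G c Δmax t κy x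
          ≥ (surplus G c Δmax t (c s(u, v)) u + surplus G c Δmax t (c s(u, v)) v)
              - (1 + 2 * ((i : ℝ) - 1)) * η) ∧
      (∀ i, 1 ≤ i → ∀ y ∈ Y i,
        surplus G c Δmax t κy y - surplus G c Δmax t κx y
          ≥ (surplus G c Δmax t (c s(u, v)) u + surplus G c Δmax t (c s(u, v)) v)
              - 2 * (i : ℝ) * η) := by
  obtain ⟨κx, hκx, hvx⟩ := exists_zero_surplus G c Δmax t hdeg ht hcol v
  obtain ⟨κy, hκy, huy⟩ := exists_zero_surplus G c Δmax t hdeg ht hcol u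
  refine ⟨κx, hκx, κy, hκy, ?_⟩
  set L := surplus G c Δmax t (c s(u, v)) u + surplus G c Δmax t (c s(u, v)) v with hL
  let step : Set V → Set V := fun S =>
    colNbr G c κy (colNbr G c κx S \ S) \ (colNbr G c κx S \ S)
  let X : ℕ → Set V := fun n =>
    Nat.rec (∅ : Set V) (fun k ih => if k = 0 then {u} else step ih) n
  let Y : ℕ → Set V := fun n => colNbr G c κx (X n) \ X n
  have hX1 : X 1 = {u} := rfl
  have hXsucc : ∀ i, 1 ≤ i → X (i + 1) = colNbr G c κy (Y i) \ Y i := by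
    intro i hi
    cases i with
    | zero => omega
    | succ k => rfl
  have Ystep : ∀ (i : ℕ) (r : ℝ),
      (∀ x ∈ X i, surplus G c Δmax t κx x - surplus G c Δmax t κy x ≥ r) →
      ∀ y ∈ Y i, surplus G c Δmax t κy y - surplus G c Δmax t κx y ≥ r - η := by
    intro i r hX y hy
    obtain ⟨⟨x, hxX, hadj, hc⟩, -⟩ := hy
    have h1 := hinv x y hadj κy hκy
    rw [hc] at h1
    have h2 := hX x hxX
    linarith
  have Xstep : ∀ (i : ℕ), 1 ≤ i → ∀ (r : ℝ),
      (∀ y ∈ Y i, surplus G c Δmax t κy y - surplus G c Δmax t κx y ≥ r) →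
      ∀ x ∈ X (i + 1), surplus G c Δmax t κx x - surplus G c Δmax t κy x ≥ r - η := by
    intro i hi r hY x hx
    rw [hXsucc i hi] at hx
    obtain ⟨⟨y, hyY, hadj, hc⟩, -⟩ := hx
    have h1 := hinv y x hadj κx hκx
    rw [hc] at h1
    have h2 := hY y hyY
    linarith
  have key : ∀ n : ℕ,
      (∀ x ∈ X (n + 1),
        surplus G c Δmax t κx x - surplus G c Δmax t κy x ≥ L - (2 * (n : ℝ) + 1) * η) ∧
      (∀ y ∈ Y (n + 1),
        surplus G c Δmax t κy y - surplus G c Δmax t κx y ≥ L - (2 * (n : ℝ) + 2) * η) := by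
    intro n
    induction n with
    | zero =>
      have hXb : ∀ x ∈ X 1,
          surplus G c Δmax t κx x - surplus G c Δmax t κy x ≥ L - (2 * (0 : ℝ) + 1) * η := by
        intro x hx
        rw [hX1, Set.mem_singleton_iff] at hx
        rw [hx]
        have h1 := hinv u v huv κx hκx
        rw [← hL] at h1
        have e : (2 * (0 : ℝ) + 1) * η = η := by ring
        linarith [hvx, h1, huy, e]
      refine ⟨by exact_mod_cast hXb, fun y hy => ?_⟩
      have := Ystep 1 _ hXb y hy
      have e : L - (2 * (0 : ℝ) + 1) * η - η = L - (2 * ((0 : ℕ) : ℝ) + 2) * η := by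
        push_cast; ring
      linarith [e ▸ this]
    | succ n ih =>
      have hXb : ∀ x ∈ X (n + 2),
          surplus G c Δmax t κx x - surplus G c Δmax t κy x
            ≥ L - (2 * ((n + 1 : ℕ) : ℝ) + 1) * η := by
        intro x hx
        have := Xstep (n + 1) (by omega) _ ih.2 x hx
        have e : L - (2 * (n : ℝ) + 2) * η - η = L - (2 * ((n + 1 : ℕ) : ℝ) + 1) * η := by
          push_cast; ring
        linarith [e ▸ this]
      refine ⟨hXb, fun y hy => ?_⟩
      have := Ystep (n + 2) _ hXb y hy
      have e : L - (2 * ((n + 1 : ℕ) : ℝ) + 1) * η - η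
          = L - (2 * ((n + 1 : ℕ) : ℝ) + 2) * η := by push_cast; ring
      linarith [e ▸ this]
  refine ⟨X, Y, hX1, fun i _ => rfl, hXsucc, ?_, ?_⟩
  · intro i hi x hx
    cases i with
    | zero => omega
    | succ n =>
      have h := (key n).1 x hx
      have e : (1 + 2 * (((n + 1 : ℕ) : ℝ) - 1)) * η = (2 * (n : ℝ) + 1) * η := by
        push_cast; ring
      rw [e]
      exact h
  · intro i hi y hy
    cases i with
    | zero => omega
    | succ n =>
      have h := (key n).2 y hy
      have e : 2 * ((n + 1 : ℕ) : ℝ) * η = (2 * (n : ℝ) + 2) * η := by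
        push_cast; ring
      rw [e]
      exact h
end

section
/- Let G be a finite simple graph, t ≥ 1 an integer, T ≥ 0 an integer threshold, and for an edge colouring c with colours {1,…,t} define the surplus s^c_i(v) = max(d^c_i(v) − T, 0) and the potential Φ(c) = Σ_{i=1}^{t} Σ_{v ∈ V(G)} s^c_i(v)·(s^c_i(v)+1)/2. Let uv be an edge of G, let κ1 = c(uv), let κ2 ≠ κ1 be another colour, and let c' be the colouring agreeing with c on every edge except that c'(uv) = κ2. If s^c_{κ1}(u) ≥ 1 and s^c_{κ1}(v) ≥ 1, then Φ(c) − Φ(c') ≥ (s^c_{κ1}(u) + s^c_{κ1}(v)) − (s^c_{κ2}(u) + s^c_{κ2}(v)) − 2. -/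
open Finset

/-- The (integer) surplus `s^c_i(v) = max (d^c_i(v) - T) 0` of colour `i` at `v`,
with respect to the threshold `T` (truncated subtraction on `ℕ`). -/
def surplusN {V : Type*} [Fintype V] [DecidableEq V] (G : SimpleGraph V)
    [DecidableRel G.Adj] (c : Sym2 V → ℕ) (T i : ℕ) (v : V) : ℕ :=
  colDeg G c i v - T

/-- The potential `Φ(c) = ∑_{i=1}^{t} ∑_{v} s^c_i(v)·(s^c_i(v)+1)/2`. -/
def potential {V : Type*} [Fintype V] [DecidableEq V] (G : SimpleGraph V)
    [DecidableRel G.Adj] (c : Sym2 V → ℕ) (t T : ℕ) : ℕ :=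
  ∑ i ∈ Finset.Icc 1 t, ∑ v : V, surplusN G c T i v * (surplusN G c T i v + 1) / 2

/- Auxiliary triangle-number lemmas. -/
lemma tri_succ (s : ℕ) : (s + 1) * (s + 1 + 1) / 2 = s * (s + 1) / 2 + (s + 1) := by
  have h : (s + 1) * (s + 1 + 1) = s * (s + 1) + 2 * (s + 1) := by ring
  have he : 2 ∣ s * (s + 1) := (Nat.even_mul_succ_self s).two_dvd
  omega

lemma tri_mono {a b : ℕ} (h : a ≤ b) : a * (a + 1) / 2 ≤ b * (b + 1) / 2 :=
  Nat.div_le_div_right (Nat.mul_le_mul h (by omega))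

/-- Colour degrees at vertices off the recoloured edge are unchanged. -/
lemma colDeg_off {V : Type*} [Fintype V] [DecidableEq V] (G : SimpleGraph V)
    [DecidableRel G.Adj] (c c' : Sym2 V → ℕ) (u v : V)
    (hagree : ∀ e : Sym2 V, e ≠ s(u, v) → c' e = c e)
    (i : ℕ) (w : V) (hwu : w ≠ u) (hwv : w ≠ v) :
    colDeg G c' i w = colDeg G c i w := by
  unfold colDeg
  congr 1
  apply Finset.filter_congr
  intro x _
  rw [hagree]
  intro h
  rw [Sym2.eq_iff] at h
  tauto

/-- Colour degrees at `u` in colours other than the two involved are unchanged. -/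
lemma colDeg_other {V : Type*} [Fintype V] [DecidableEq V] (G : SimpleGraph V)
    [DecidableRel G.Adj] (c c' : Sym2 V → ℕ) (u v : V) (κ1 κ2 : ℕ)
    (hc : c s(u, v) = κ1) (hc' : c' s(u, v) = κ2)
    (hagree : ∀ e : Sym2 V, e ≠ s(u, v) → c' e = c e)
    (i : ℕ) (hi1 : i ≠ κ1) (hi2 : i ≠ κ2) :
    colDeg G c' i u = colDeg G c i u := by
  unfold colDeg
  congr 1
  apply Finset.filter_congr
  intro x _
  by_cases hx : x = v
  · subst hx
    simp only [hc, hc']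
    exact ⟨fun h => absurd h.symm hi2, fun h => absurd h.symm hi1⟩
  · rw [hagree]
    intro h
    rw [Sym2.eq_iff] at h
    rcases h with ⟨_, h⟩ | ⟨h1, h2⟩
    · exact hx h
    · exact hx (h2.trans h1)

/-- Losing the recoloured edge: the colour degree in the old colour drops by one. -/
lemma colDeg_edge {V : Type*} [Fintype V] [DecidableEq V] (G : SimpleGraph V)
    [DecidableRel G.Adj] (c c' : Sym2 V → ℕ) (u v : V) (κ1 κ2 : ℕ)
    (huv : G.Adj u v) (hne : κ2 ≠ κ1)
    (hc : c s(u, v) = κ1) (hc' : c' s(u, v) = κ2)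
    (hagree : ∀ e : Sym2 V, e ≠ s(u, v) → c' e = c e) :
    colDeg G c κ1 u = colDeg G c' κ1 u + 1 := by
  unfold colDeg
  have hkey : ((G.neighborFinset u).filter (fun x => c s(u, x) = κ1))
      = insert v ((G.neighborFinset u).filter (fun x => c' s(u, x) = κ1)) := by
    ext x
    simp only [Finset.mem_insert, Finset.mem_filter, SimpleGraph.mem_neighborFinset]
    by_cases hx : x = v
    · subst hx
      simp [huv, hc]
    · have heq : c' s(u, x) = c s(u, x) := by
        apply hagree
        intro h
        rw [Sym2.eq_iff] at h
        rcases h with ⟨_, h⟩ | ⟨h1, h2⟩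
        · exact hx h
        · exact hx (h2.trans h1)
      rw [heq]
      tauto
  rw [hkey, Finset.card_insert_of_notMem]
  simp only [Finset.mem_filter, SimpleGraph.mem_neighborFinset, hc']
  tauto

/-- Recolouring an edge `uv` from `κ1` to `κ2` drops the potential by at least the surplus
difference minus `2`, provided both `κ1`-surpluses at `u` and `v` are positive. -/
theorem potential_drop {V : Type*} [Fintype V] [DecidableEq V]
    (G : SimpleGraph V) [DecidableRel G.Adj]
    (t T : ℕ) (ht : 1 ≤ t)
    (c c' : Sym2 V → ℕ) (u v : V) (κ1 κ2 : ℕ)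
    (huv : G.Adj u v)
    (hκ1 : κ1 ∈ Finset.Icc 1 t) (hκ2 : κ2 ∈ Finset.Icc 1 t) (hne : κ2 ≠ κ1)
    (hc : c s(u, v) = κ1)
    (hc' : c' s(u, v) = κ2)
    (hagree : ∀ e : Sym2 V, e ≠ s(u, v) → c' e = c e)
    (hsu : 1 ≤ surplusN G c T κ1 u) (hsv : 1 ≤ surplusN G c T κ1 v) :
    ((surplusN G c T κ1 u : ℤ) + (surplusN G c T κ1 v : ℤ))
        - ((surplusN G c T κ2 u : ℤ) + (surplusN G c T κ2 v : ℤ)) - 2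
      ≤ (potential G c t T : ℤ) - (potential G c' t T : ℤ) := by
  -- symmetric versions of the hypotheses with u and v swapped
  have hcv : c s(v, u) = κ1 := by rwa [Sym2.eq_swap]
  have hcv' : c' s(v, u) = κ2 := by rwa [Sym2.eq_swap]
  have hagreev : ∀ e : Sym2 V, e ≠ s(v, u) → c' e = c e := by
    intro e he
    exact hagree e (by rwa [Sym2.eq_swap] at he)
  have hagree' : ∀ e : Sym2 V, e ≠ s(u, v) → c e = c' e :=
    fun e he => (hagree e he).symm
  have hagreev' : ∀ e : Sym2 V, e ≠ s(v, u) → c e = c' e :=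
    fun e he => (hagreev e he).symm
  -- colour degree relations
  have h1u : colDeg G c κ1 u = colDeg G c' κ1 u + 1 :=
    colDeg_edge G c c' u v κ1 κ2 huv hne hc hc' hagree
  have h1v : colDeg G c κ1 v = colDeg G c' κ1 v + 1 :=
    colDeg_edge G c c' v u κ1 κ2 huv.symm hne hcv hcv' hagreev
  have h2u : colDeg G c' κ2 u = colDeg G c κ2 u + 1 :=
    colDeg_edge G c' c u v κ2 κ1 huv (Ne.symm hne) hc' hc hagree'
  have h2v : colDeg G c' κ2 v = colDeg G c κ2 v + 1 :=
    colDeg_edge G c' c v u κ2 κ1 huv.symm (Ne.symm hne) hcv' hcv hagreev'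
  -- define the per-(colour,vertex) difference
  set g : ℕ → V → ℤ := fun i w =>
    (surplusN G c T i w * (surplusN G c T i w + 1) / 2 : ℕ)
      - (surplusN G c' T i w * (surplusN G c' T i w + 1) / 2 : ℕ) with hg
  have hpot : (potential G c t T : ℤ) - (potential G c' t T : ℤ)
      = ∑ i ∈ Finset.Icc 1 t, ∑ w : V, g i w := by
    unfold potential
    rw [Nat.cast_sum, Nat.cast_sum, ← Finset.sum_sub_distrib]
    apply Finset.sum_congr rfl
    intro i _
    rw [Nat.cast_sum, Nat.cast_sum, ← Finset.sum_sub_distrib]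
  -- vanishing off u, v
  have hgzero : ∀ i : ℕ, ∀ w : V, w ≠ u → w ≠ v → g i w = 0 := by
    intro i w hwu hwv
    have : colDeg G c' i w = colDeg G c i w := colDeg_off G c c' u v hagree i w hwu hwv
    simp [hg, surplusN, this]
  have hinner : ∀ i : ℕ, ∑ w : V, g i w = g i u + g i v := by
    intro i
    refine Finset.sum_eq_add u v huv.ne ?_ (fun h => absurd (Finset.mem_univ u) h) (fun h => absurd (Finset.mem_univ v) h)
    intro w _ hw
    exact hgzero i w hw.1 hw.2
  -- vanishing at other colours
  have hother : ∀ i : ℕ, i ≠ κ1 → i ≠ κ2 → g i u + g i v = 0 := by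
    intro i hi1 hi2
    have hu : colDeg G c' i u = colDeg G c i u :=
      colDeg_other G c c' u v κ1 κ2 hc hc' hagree i hi1 hi2
    have hv : colDeg G c' i v = colDeg G c i v :=
      colDeg_other G c c' v u κ1 κ2 hcv hcv' hagreev i hi1 hi2
    simp [hg, surplusN, hu, hv]
  have houter : ∑ i ∈ Finset.Icc 1 t, (g i u + g i v)
      = (g κ1 u + g κ1 v) + (g κ2 u + g κ2 v) := by
    refine Finset.sum_eq_add κ1 κ2 (Ne.symm hne) ?_ (fun h => absurd hκ1 h) (fun h => absurd hκ2 h)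
    intro i _ hi
    exact hother i hi.1 hi.2
  have htotal : (potential G c t T : ℤ) - (potential G c' t T : ℤ)
      = (g κ1 u + g κ1 v) + (g κ2 u + g κ2 v) := by
    rw [hpot]
    rw [Finset.sum_congr rfl (fun i _ => hinner i), houter]
  rw [htotal]
  -- now the arithmetic: abbreviations
  have hs1u : surplusN G c' T κ1 u + 1 = surplusN G c T κ1 u := by
    unfold surplusN at *; omega
  have hs1v : surplusN G c' T κ1 v + 1 = surplusN G c T κ1 v := by
    unfold surplusN at *; omega
  have hs2u : surplusN G c' T κ2 u ≤ surplusN G c T κ2 u + 1 := by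
    unfold surplusN; omega
  have hs2v : surplusN G c' T κ2 v ≤ surplusN G c T κ2 v + 1 := by
    unfold surplusN; omega
  -- g κ1 u = s1u, g κ1 v = s1v
  have hg1u : g κ1 u = (surplusN G c T κ1 u : ℤ) := by
    rw [hg]
    simp only
    rw [← hs1u, tri_succ]
    omega
  have hg1v : g κ1 v = (surplusN G c T κ1 v : ℤ) := by
    rw [hg]
    simp only
    rw [← hs1v, tri_succ]
    omega
  -- g κ2 bounds
  have hg2u : -((surplusN G c T κ2 u : ℤ) + 1) ≤ g κ2 u := by
    rw [hg]
    simp only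
    have hb : surplusN G c' T κ2 u * (surplusN G c' T κ2 u + 1) / 2
        ≤ surplusN G c T κ2 u * (surplusN G c T κ2 u + 1) / 2 + (surplusN G c T κ2 u + 1) := by
      calc surplusN G c' T κ2 u * (surplusN G c' T κ2 u + 1) / 2
          ≤ (surplusN G c T κ2 u + 1) * (surplusN G c T κ2 u + 1 + 1) / 2 := tri_mono hs2u
        _ = surplusN G c T κ2 u * (surplusN G c T κ2 u + 1) / 2 + (surplusN G c T κ2 u + 1) :=
            tri_succ _
    omega
  have hg2v : -((surplusN G c T κ2 v : ℤ) + 1) ≤ g κ2 v := by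
    rw [hg]
    simp only
    have hb : surplusN G c' T κ2 v * (surplusN G c' T κ2 v + 1) / 2
        ≤ surplusN G c T κ2 v * (surplusN G c T κ2 v + 1) / 2 + (surplusN G c T κ2 v + 1) := by
      calc surplusN G c' T κ2 v * (surplusN G c' T κ2 v + 1) / 2
          ≤ (surplusN G c T κ2 v + 1) * (surplusN G c T κ2 v + 1 + 1) / 2 := tri_mono hs2v
        _ = surplusN G c T κ2 v * (surplusN G c T κ2 v + 1) / 2 + (surplusN G c T κ2 v + 1) :=
            tri_succ _
    omega
  rw [hg1u, hg1v]
  linarith [hg2u, hg2v]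
end

section
/- Let G be a finite simple graph with maximum degree at most Δmax, let c be a proper partial edge colouring of G with colour set {1,…,Δmax+1}, let uv be an edge of G that is uncoloured under c, and let κ1 ∈ A(u) and κ2 ∈ A(v) be colours. Then there exist an integer k ≥ 1, pairwise distinct vertices w_1,…,w_k all adjacent to u with w_1 = v, and colours α_1,…,α_k ∈ {1,…,Δmax+1}, such that: α_i ∈ A(w_i) for every 1 ≤ i ≤ k; α_i ≠ κ2 for every 1 ≤ i ≤ k−1; for every 1 ≤ i ≤ k−1 the edge u w_{i+1} is coloured and c(u w_{i+1}) = α_i; and at least one of the following holds: (1) α_k ∈ A(u); (2) α_k = α_j for some 1 ≤ j < k; (3) α_k = κ2, w_k ≠ v, and no edge u w_i (1 ≤ i ≤ k) is coloured κ2. -/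
/-!
Grow the fan greedily. At the last vertex `w k` pick an available colour `α k`; at `w 1 = v`
pick one different from `κ2`, which exists because `uv` is uncoloured, so at most `Δmax - 1`
of the `Δmax + 1` colours are used at `v`. If no stopping case applies, `α k` is used at `u`,
on an edge `u y`, and `y` is a new fan vertex: the fan edges `u w i` are uncoloured (`i = 1`)
or coloured `α (i - 1)`, and `α k` differs from all of these. All fan vertices are neighbours
of `u`, so the fan has at most `Δmax` vertices and the growth stops.
-/

open Finset

def ProperPartial {V : Type*} (G : SimpleGraph V) (c : Sym2 V → Option ℕ) : Prop :=
  ∀ u v w κ, G.Adj u v → G.Adj u w → v ≠ w → c s(u, v) = some κ → c s(u, w) ≠ some κ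

def avail {V : Type*} (G : SimpleGraph V) (Δmax : ℕ) (c : Sym2 V → Option ℕ) (x : V) :
    Set ℕ :=
  {κ | κ ∈ Finset.Icc 1 (Δmax + 1) ∧ ∀ y, G.Adj x y → c s(x, y) ≠ some κ}

open Function

section Avail

variable {V : Type*} {G : SimpleGraph V} {Δmax : ℕ} {c : Sym2 V → Option ℕ}

lemma exists_mem_avail_notMem {x : V} {T : Finset V} {S : Finset ℕ}
    (hT : ∀ y, G.Adj x y → c s(x, y) ≠ none → y ∈ T) (hcard : #T + #S ≤ Δmax) :
    ∃ β ∈ avail G Δmax c x, β ∉ S := by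
  set used := T.image fun y => (c s(x, y)).getD 0
  obtain ⟨β, hβ⟩ : (Icc 1 (Δmax + 1) \ (used ∪ S)).Nonempty := by
    have h₁ := le_card_sdiff (used ∪ S) (Icc 1 (Δmax + 1))
    have h₂ := card_union_le used S
    have h₃ : #used ≤ #T := card_image_le
    rw [Nat.card_Icc] at h₁
    rw [← card_pos]
    omega
  rw [mem_sdiff, mem_union, not_or] at hβ
  refine ⟨β, ⟨hβ.1, fun y hy hyβ => hβ.2.1 ?_⟩, hβ.2.2⟩
  exact mem_image.mpr ⟨y, hT y hy (by simp [hyβ]), by simp [hyβ]⟩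

variable [G.LocallyFinite]

lemma exists_mem_avail {x : V} (hdeg : G.degree x ≤ Δmax) : ∃ β, β ∈ avail G Δmax c x := by
  obtain ⟨β, hβ, -⟩ := exists_mem_avail_notMem (S := ∅)
    (fun y hy _ => (G.mem_neighborFinset x y).2 hy) (by simpa using hdeg)
  exact ⟨β, hβ⟩

lemma exists_mem_avail_ne {x y : V} (hdeg : G.degree x ≤ Δmax) (hxy : G.Adj x y)
    (hunc : c s(x, y) = none) (κ : ℕ) : ∃ β ∈ avail G Δmax c x, β ≠ κ := by
  classical
  have hT : ∀ z, G.Adj x z → c s(x, z) ≠ none → z ∈ (G.neighborFinset x).erase y :=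
    fun z hz hcz => mem_erase.2 ⟨fun hzy => hcz (hzy ▸ hunc), (G.mem_neighborFinset x z).2 hz⟩
  have hcard : #((G.neighborFinset x).erase y) = G.degree x - 1 :=
    card_erase_of_mem ((G.mem_neighborFinset x y).2 hxy)
  have hpos : 0 < G.degree x := G.degree_pos_iff_exists_adj x |>.2 ⟨y, hxy⟩
  obtain ⟨β, hβ, hβκ⟩ := exists_mem_avail_notMem (Δmax := Δmax) (S := {κ}) hT
    (by rw [hcard, card_singleton]; omega)
  exact ⟨β, hβ, by simpa using hβκ⟩

end Avail

section Fan

variable {V : Type*} {G : SimpleGraph V} {Δmax : ℕ} {c : Sym2 V → Option ℕ} {u v : V} {κ : ℕ}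

/-- The fan `w 1, …, w k` around `u` built so far, together with the colours `α 1, …, α (k-1)`;
the colour `α k` at the last vertex is still to be chosen. -/
structure IsPartialFan (G : SimpleGraph V) (Δmax : ℕ) (c : Sym2 V → Option ℕ) (u v : V)
    (κ k : ℕ) (w : ℕ → V) (α : ℕ → ℕ) : Prop where
  one_le : 1 ≤ k
  injOn : Set.InjOn w (Set.Icc 1 k)
  adj : ∀ i ∈ Set.Icc 1 k, G.Adj u (w i)
  first : w 1 = v
  uncoloured : c s(u, v) = none
  mem_avail : ∀ i ∈ Set.Ico 1 k, α i ∈ avail G Δmax c (w i)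
  avoids : ∀ i ∈ Set.Ico 1 k, α i ≠ κ
  edgeColour : ∀ i ∈ Set.Ico 1 k, c s(u, w (i + 1)) = some (α i)

def IsSecondFan (G : SimpleGraph V) (Δmax : ℕ) (c : Sym2 V → Option ℕ) (u v : V)
    (κ k : ℕ) (w : ℕ → V) (α : ℕ → ℕ) : Prop :=
  1 ≤ k ∧
  (∀ i j, 1 ≤ i → i < j → j ≤ k → w i ≠ w j) ∧
  (∀ i, 1 ≤ i → i ≤ k → G.Adj u (w i)) ∧
  w 1 = v ∧
  (∀ i, 1 ≤ i → i ≤ k → α i ∈ avail G Δmax c (w i)) ∧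
  (∀ i, 1 ≤ i → i ≤ k - 1 → α i ≠ κ) ∧
  (∀ i, 1 ≤ i → i ≤ k - 1 → c s(u, w (i + 1)) = some (α i)) ∧
  (α k ∈ avail G Δmax c u ∨
    (∃ j, 1 ≤ j ∧ j < k ∧ α k = α j) ∨
    (α k = κ ∧ w k ≠ v ∧ ∀ i, 1 ≤ i → i ≤ k → c s(u, w i) ≠ some κ))

namespace IsPartialFan

lemma initial {α : ℕ → ℕ} (huv : G.Adj u v) (hunc : c s(u, v) = none) :
    IsPartialFan G Δmax c u v κ 1 (fun _ => v) α where
  one_le := le_rfl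
  injOn := (Set.subsingleton_Icc_of_ge le_rfl).injOn _
  adj _ _ := huv
  first := rfl
  uncoloured := hunc
  mem_avail _ hi := by obtain ⟨h₁, h₂⟩ := hi; omega
  avoids _ hi := by obtain ⟨h₁, h₂⟩ := hi; omega
  edgeColour _ hi := by obtain ⟨h₁, h₂⟩ := hi; omega

variable {k : ℕ} {w : ℕ → V} {α : ℕ → ℕ}

lemma edgeColour_mem (hF : IsPartialFan G Δmax c u v κ k w α) {i γ : ℕ} (hi : i ∈ Set.Icc 1 k)
    (hγ : c s(u, w i) = some γ) :
    γ ∈ α '' Set.Ico 1 k := by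
  obtain ⟨hi₁, hik⟩ := hi
  rcases hi₁.eq_or_lt with rfl | hi₁
  · rw [hF.first, hF.uncoloured] at hγ
    cases hγ
  · have h := hF.edgeColour (i - 1) ⟨by omega, by omega⟩
    rw [Nat.sub_add_cancel hi₁.le, hγ] at h
    exact ⟨i - 1, ⟨by omega, by omega⟩, (Option.some.inj h).symm⟩

lemma le_degree [G.LocallyFinite] (hF : IsPartialFan G Δmax c u v κ k w α) :
    k ≤ G.degree u := by
  have h := card_le_card_of_injOn w (s := Icc 1 k) (t := G.neighborFinset u)
    (fun i hi => (G.mem_neighborFinset u _).2 (hF.adj i (by simpa using hi)))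
    (by simpa using hF.injOn)
  simpa using h

lemma extend (hF : IsPartialFan G Δmax c u v κ k w α) {β : ℕ} {y : V}
    (hβ : β ∈ avail G Δmax c (w k)) (hβκ : β ≠ κ)
    (hβα : β ∉ α '' Set.Ico 1 k) (hy : G.Adj u y) (hyβ : c s(u, y) = some β) :
    IsPartialFan G Δmax c u v κ (k + 1) (update w (k + 1) y) (update α k β) := by
  have hk := hF.one_le
  have hIcc : Set.Icc 1 (k + 1) = insert (k + 1) (Set.Icc 1 k) := by
    ext i; simp only [Set.mem_Icc, Set.mem_insert_iff]; omega
  have hIco {i : ℕ} (hi : i ∈ Set.Ico 1 (k + 1)) : i = k ∨ i ∈ Set.Ico 1 k := by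
    obtain ⟨h₁, h₂⟩ := hi; simp only [Set.mem_Ico]; omega
  have hy_new : y ∉ w '' Set.Icc 1 k := by
    rintro ⟨i, hi, rfl⟩
    exact hβα (hF.edgeColour_mem hi hyβ)
  have hw : Set.EqOn (update w (k + 1) y) w (Set.Icc 1 k) :=
    fun i hi => update_of_ne (by have := hi.2; omega) _ _
  have hα : Set.EqOn (update α k β) α (Set.Ico 1 k) := fun i hi => update_of_ne hi.2.ne _ _
  refine ⟨by omega, ?_, ?_, (update_of_ne (by omega) _ _).trans hF.first, hF.uncoloured,
    ?_, ?_, ?_⟩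
  · rw [hIcc, Set.injOn_insert (by simp)]
    exact ⟨hF.injOn.congr hw.symm, by rwa [update_self, hw.image_eq]⟩
  · intro i hi
    rw [hIcc] at hi
    rcases hi with rfl | hi
    · rwa [update_self]
    · rw [hw hi]; exact hF.adj i hi
  · intro i hi
    rcases hIco hi with rfl | hi
    · rwa [update_self, update_of_ne (by omega)]
    · rw [hα hi, hw ⟨hi.1, hi.2.le⟩]; exact hF.mem_avail i hi
  · intro i hi
    rcases hIco hi with rfl | hi
    · rwa [update_self]
    · rw [hα hi]; exact hF.avoids i hi
  · intro i hi
    rcases hIco hi with rfl | hi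
    · rwa [update_self, update_self]
    · rw [hα hi, hw ⟨Nat.le_add_left 1 i, hi.2⟩]; exact hF.edgeColour i hi

lemma isSecondFan (hF : IsPartialFan G Δmax c u v κ k w α) {β : ℕ}
    (hβ : β ∈ avail G Δmax c (w k))
    (hstop : β ∈ avail G Δmax c u ∨ β ∈ α '' Set.Ico 1 k ∨ (β = κ ∧ 1 < k)) :
    IsSecondFan G Δmax c u v κ k w (update α k β) := by
  have hk := hF.one_le
  have hα {i : ℕ} (hik : i ≤ k - 1) : update α k β i = α i := update_of_ne (by omega) _ _
  refine ⟨hk, fun i j hi hij hj h => hij.ne (hF.injOn ⟨hi, by omega⟩ ⟨by omega, hj⟩ h),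
    fun i hi hik => hF.adj i ⟨hi, hik⟩, hF.first, ?_,
    fun i hi hik => (hα hik).symm ▸ hF.avoids i ⟨hi, by omega⟩,
    fun i hi hik => (hα hik).symm ▸ hF.edgeColour i ⟨hi, by omega⟩, ?_⟩
  · intro i hi hik
    rcases hik.eq_or_lt with rfl | hik
    · rwa [update_self]
    · rw [hα (by omega)]; exact hF.mem_avail i ⟨hi, hik⟩
  · rw [update_self]
    rcases hstop with hu | ⟨j, hj, rfl⟩ | ⟨rfl, hk₁⟩
    · exact Or.inl hu
    · exact Or.inr (Or.inl ⟨j, hj.1, hj.2, (hα (by have := hj.2; omega)).symm⟩)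
    · refine Or.inr (Or.inr ⟨rfl, fun h => ?_, fun i hi hik hκ => ?_⟩)
      · have := hF.injOn ⟨hk, le_rfl⟩ ⟨le_rfl, hk⟩ (h.trans hF.first.symm)
        omega
      · obtain ⟨j, hj, hjκ⟩ := hF.edgeColour_mem ⟨hi, hik⟩ hκ
        exact hF.avoids j hj hjκ

lemma exists_mem_avail_last [G.LocallyFinite] (hF : IsPartialFan G Δmax c u v κ k w α)
    (hdeg : ∀ x, G.degree x ≤ Δmax) :
    ∃ β ∈ avail G Δmax c (w k), β = κ → 1 < k := by
  rcases hF.one_le.eq_or_lt with rfl | hk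
  · have hvu : G.Adj v u := (hF.first ▸ hF.adj 1 ⟨le_rfl, le_rfl⟩).symm
    obtain ⟨β, hβ, hβκ⟩ := exists_mem_avail_ne (hdeg v) hvu (Sym2.eq_swap ▸ hF.uncoloured) κ
    exact ⟨β, hF.first ▸ hβ, fun h => absurd h hβκ⟩
  · obtain ⟨β, hβ⟩ := exists_mem_avail (c := c) (hdeg (w k))
    exact ⟨β, hβ, fun _ => hk⟩

end IsPartialFan

theorem IsPartialFan.exists_isSecondFan [G.LocallyFinite] (hdeg : ∀ x, G.degree x ≤ Δmax)
    {k : ℕ} {w : ℕ → V} {α : ℕ → ℕ} (hF : IsPartialFan G Δmax c u v κ k w α) :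
    ∃ k w α, IsSecondFan G Δmax c u v κ k w α := by
  obtain ⟨β, hβ, hβκ⟩ := hF.exists_mem_avail_last hdeg
  by_cases hstop : β ∈ avail G Δmax c u ∨ β ∈ α '' Set.Ico 1 k ∨ (β = κ ∧ 1 < k)
  · exact ⟨k, w, _, hF.isSecondFan hβ hstop⟩
  obtain ⟨hβu, hβα, hβκ'⟩ :
      β ∉ avail G Δmax c u ∧ β ∉ α '' Set.Ico 1 k ∧ ¬(β = κ ∧ 1 < k) := by
    simpa only [not_or] using hstop
  obtain ⟨y, hy, hyβ⟩ : ∃ y, G.Adj u y ∧ c s(u, y) = some β := by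
    by_contra! h
    exact hβu ⟨hβ.1, h⟩
  exact (hF.extend hβ (fun h => hβκ' ⟨h, hβκ h⟩) hβα hy hyβ).exists_isSecondFan hdeg
termination_by Δmax + 1 - k
decreasing_by
  have := hF.le_degree
  have := hdeg u
  omega

end Fan

theorem second_fan_exists_general {V : Type*} [Fintype V]
    (G : SimpleGraph V) [DecidableRel G.Adj] (Δmax : ℕ)
    (hdeg : ∀ x, G.degree x ≤ Δmax)
    (c : Sym2 V → Option ℕ)
    (u v : V) (huv : G.Adj u v) (hunc : c s(u, v) = none)
    (κ2 : ℕ) :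
    ∃ (k : ℕ) (w : ℕ → V) (α : ℕ → ℕ),
      1 ≤ k ∧
      (∀ i j, 1 ≤ i → i < j → j ≤ k → w i ≠ w j) ∧
      (∀ i, 1 ≤ i → i ≤ k → G.Adj u (w i)) ∧
      w 1 = v ∧
      (∀ i, 1 ≤ i → i ≤ k → α i ∈ avail G Δmax c (w i)) ∧
      (∀ i, 1 ≤ i → i ≤ k - 1 → α i ≠ κ2) ∧
      (∀ i, 1 ≤ i → i ≤ k - 1 → c s(u, w (i + 1)) = some (α i)) ∧
      (α k ∈ avail G Δmax c u ∨
        (∃ j, 1 ≤ j ∧ j < k ∧ α k = α j) ∨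
        (α k = κ2 ∧ w k ≠ v ∧ ∀ i, 1 ≤ i → i ≤ k → c s(u, w i) ≠ some κ2)) :=
  (IsPartialFan.initial (κ := κ2) (α := fun _ => 0) huv hunc).exists_isSecondFan hdeg

/-- The second fan lemma: given an uncoloured edge `uv` of a graph with maximum degree at
most `Δmax`, properly partially `(Δmax+1)`-edge-coloured, and colours `κ1 ∈ A(u)`,
`κ2 ∈ A(v)`, there is a fan `w 1, …, w k` around `u` with `w 1 = v`, representative
available colours `α 1, …, α k` avoiding `κ2` except possibly at the last step, such that
`c (u (w (i+1))) = α i`, and one of the three termination cases holds: the last colour is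
available at `u`, repeats an earlier representative colour, or equals `κ2` while
`w k ≠ v` and no fan edge is coloured `κ2`. -/
theorem second_fan_exists {V : Type*} [Fintype V] [DecidableEq V]
    (G : SimpleGraph V) [DecidableRel G.Adj] (Δmax : ℕ)
    (hdeg : ∀ x, G.degree x ≤ Δmax)
    (c : Sym2 V → Option ℕ)
    (hrange : ∀ x y κ, G.Adj x y → c s(x, y) = some κ → κ ∈ Finset.Icc 1 (Δmax + 1))
    (hproper : ProperPartial G c)
    (u v : V) (huv : G.Adj u v) (hunc : c s(u, v) = none)
    (κ1 κ2 : ℕ) (hκ1 : κ1 ∈ avail G Δmax c u) (hκ2 : κ2 ∈ avail G Δmax c v) :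
    ∃ (k : ℕ) (w : ℕ → V) (α : ℕ → ℕ),
      1 ≤ k ∧
      (∀ i j, 1 ≤ i → i < j → j ≤ k → w i ≠ w j) ∧
      (∀ i, 1 ≤ i → i ≤ k → G.Adj u (w i)) ∧
      w 1 = v ∧
      (∀ i, 1 ≤ i → i ≤ k → α i ∈ avail G Δmax c (w i)) ∧
      (∀ i, 1 ≤ i → i ≤ k - 1 → α i ≠ κ2) ∧
      (∀ i, 1 ≤ i → i ≤ k - 1 → c s(u, w (i + 1)) = some (α i)) ∧
      (α k ∈ avail G Δmax c u ∨
        (∃ j, 1 ≤ j ∧ j < k ∧ α k = α j) ∨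
        (α k = κ2 ∧ w k ≠ v ∧ ∀ i, 1 ≤ i → i ≤ k → c s(u, w i) ≠ some κ2)) :=
  second_fan_exists_general G Δmax hdeg c u v huv hunc κ2
end

section
/- Let n ≥ 2^128 be a natural number, set L = log₂ n, let 0 < ε < 1 be real, let μ = ε/(128·L), and define t1 = ⌊2^{10·√L}⌋, t' = ⌊2^{√L}⌋ and t2 = ⌊L/ε⌋. Let Δmax be a real number with 1 ≤ Δmax ≤ n, let h be a natural number, and let Δ_0, Δ_1, …, Δ_h be real numbers with Δ_0 = Δmax and such that for every 0 ≤ i < h we have Δ_{i+1} ≤ (1+μ)·Δ_i / t(i), where t(i) = t1 if Δmax ≥ t1·(t')^i and t(i) = t2 otherwise. If Δ_h ≥ 1, then h ≤ 4·√L. -/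
/-!
Telescoping the recurrence and using `1 ≤ Δ_h` gives `∏_{i<h} t(i) ≤ Δmax (1 + μ)^h ≤ Δmax 2^h`.
If every level uses a `t1`-splitter, then `(2^{10√L} / 2)^h ≤ 2^L 2^h`, so `h ≤ L / (10√L - 2)`.
Otherwise let `k` be the first `t2`-level, so `Δmax < t1 t'^k`; since `t1 ≥ 128 t'` and
`t2 ≥ 128`, the product is at least `t'^k 128^h`, whence `64^h ≤ t1 ≤ 2^{10√L}`.
-/

open Real Finset

/-- The paper's `t(i)`, with `a = t1`, `b = t2`, `r = t'` and `D = Δmax`. -/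
noncomputable def splitterParam (a b r D : ℝ) (i : ℕ) : ℝ :=
  if a * r ^ i ≤ D then a else b

lemma mul_prod_range_le_of_le_mul_div {x t : ℕ → ℝ} {c : ℝ} (hc : 0 ≤ c) :
    ∀ {h : ℕ}, (∀ i < h, 0 < t i) → (∀ i < h, x (i + 1) ≤ c * x i / t i) →
      x h * ∏ i ∈ range h, t i ≤ x 0 * c ^ h
  | 0, _, _ => by simp
  | h + 1, ht, hx => by
    have ih := mul_prod_range_le_of_le_mul_div hc (h := h)
      (fun i hi => ht i (by omega)) (fun i hi => hx i (by omega))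
    have hstep : x (h + 1) * t h ≤ c * x h := (le_div_iff₀ (ht h (by omega))).1 (hx h (by omega))
    have hprod : 0 ≤ ∏ i ∈ range h, t i := prod_nonneg fun i hi => (ht i (Nat.lt_succ_of_lt (mem_range.1 hi))).le
    calc x (h + 1) * ∏ i ∈ range (h + 1), t i
        = x (h + 1) * t h * ∏ i ∈ range h, t i := by rw [prod_range_succ]; ring
      _ ≤ c * x h * ∏ i ∈ range h, t i := mul_le_mul_of_nonneg_right hstep hprod
      _ = c * (x h * ∏ i ∈ range h, t i) := by ring
      _ ≤ c * (x 0 * c ^ h) := mul_le_mul_of_nonneg_left ih hc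
      _ = x 0 * c ^ (h + 1) := by ring

lemma prod_range_le_mul_pow_of_le_mul_div {x t : ℕ → ℝ} {c : ℝ} {h : ℕ} (hc : 0 ≤ c)
    (ht : ∀ i < h, 0 < t i) (hx : ∀ i < h, x (i + 1) ≤ c * x i / t i) (hxh : 1 ≤ x h) :
    ∏ i ∈ range h, t i ≤ x 0 * c ^ h :=
  (le_mul_of_one_le_left (prod_nonneg fun i hi => (ht i (mem_range.1 hi)).le) hxh).trans
    (mul_prod_range_le_of_le_mul_div hc ht hx)

lemma pow_mul_pow_sub_le_prod_range {t : ℕ → ℝ} {u v : ℝ} {k h : ℕ} (hkh : k ≤ h)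
    (hu : 0 ≤ u) (hv : 0 ≤ v) (hlow : ∀ i < k, u ≤ t i) (hhigh : ∀ i < h, v ≤ t i) :
    u ^ k * v ^ (h - k) ≤ ∏ i ∈ range h, t i := by
  rw [← prod_range_mul_prod_Ico t hkh]
  have hfirst : u ^ k ≤ ∏ i ∈ range k, t i := by
    simpa using prod_le_prod (fun _ _ => hu) fun i hi => hlow i (mem_range.1 hi)
  have hrest : v ^ (h - k) ≤ ∏ i ∈ Ico k h, t i := by
    simpa using prod_le_prod (fun _ _ => hv) fun i hi => hhigh i (mem_Ico.1 hi).2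
  exact mul_le_mul hfirst hrest (by positivity) ((pow_nonneg hu k).trans hfirst)

section splitterParam

variable {a b r D : ℝ}

lemma min_le_splitterParam (i : ℕ) : min a b ≤ splitterParam a b r D i :=
  inf_le_ite a b _

lemma splitterParam_of_le {i : ℕ} (hi : a * r ^ i ≤ D) : splitterParam a b r D i = a :=
  if_pos hi

lemma splitterParam_pos (ha : 0 < a) (hb : 0 < b) (i : ℕ) : 0 < splitterParam a b r D i :=
  (lt_min ha hb).trans_le (min_le_splitterParam i)

/-- In the second case, the first level `k` using `b` has `D < a * r ^ k`, which cancels the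
factor `r ^ k` gained on the levels before it. -/
lemma pow_le_or_pow_le_of_prod_splitterParam_le {c m : ℝ} {h : ℕ} (hr : 1 ≤ r) (hm : 0 ≤ m)
    (hmb : m ≤ b) (hma : r * m ≤ a) (hc : 0 ≤ c)
    (hprod : ∏ i ∈ range h, splitterParam a b r D i ≤ D * c ^ h) :
    a ^ h ≤ D * c ^ h ∨ m ^ h ≤ a * c ^ h := by
  by_cases hall : ∀ i < h, a * r ^ i ≤ D
  · left
    calc a ^ h = ∏ i ∈ range h, splitterParam a b r D i := by
          rw [prod_congr rfl fun i hi => splitterParam_of_le (hall i (mem_range.1 hi)),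
            prod_const, card_range]
      _ ≤ D * c ^ h := hprod
  right
  push Not at hall
  obtain ⟨hkh, hkD⟩ := Nat.find_spec hall
  set k := Nat.find hall
  have hbefore : ∀ i < k, a * r ^ i ≤ D := fun i hi => by
    simpa [hi.trans hkh] using Nat.find_min hall hi
  have hrk : 0 < r ^ k := pow_pos (by linarith) k
  have hm_le : m ≤ min a b := le_min (le_mul_of_one_le_left hm hr |>.trans hma) hmb
  have hlow := pow_mul_pow_sub_le_prod_range (t := splitterParam a b r D) hkh.le
    (mul_nonneg (by linarith) hm) hm
    (fun i hi => hma.trans_eq (splitterParam_of_le (hbefore i hi)).symm)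
    (fun i _ => hm_le.trans (min_le_splitterParam i))
  rw [mul_pow, mul_assoc, pow_mul_pow_sub _ hkh.le] at hlow
  refine le_of_mul_le_mul_left ?_ hrk
  calc r ^ k * m ^ h ≤ D * c ^ h := hlow.trans hprod
    _ ≤ a * r ^ k * c ^ h := mul_le_mul_of_nonneg_right hkD.le (pow_nonneg hc h)
    _ = r ^ k * (a * c ^ h) := by ring

end splitterParam

section twoRpow

variable {s : ℝ}

lemma two_rpow_sub_one_le_floor_two_rpow (hs : 0 ≤ s) : (2 : ℝ) ^ (s - 1) ≤ ⌊(2 : ℝ) ^ s⌋₊ := by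
  rw [rpow_sub_one two_ne_zero]
  exact (Nat.div_two_lt_floor (one_le_rpow one_le_two hs)).le

lemma one_le_floor_two_rpow (hs : 0 ≤ s) : (1 : ℝ) ≤ ⌊(2 : ℝ) ^ s⌋₊ :=
  Nat.one_le_cast.2 <| Nat.one_le_floor_iff _ |>.2 <| one_le_rpow one_le_two hs

lemma floor_two_rpow_mul_128_le_floor_two_rpow_ten_mul (hs : 1 ≤ s) :
    (⌊(2 : ℝ) ^ s⌋₊ : ℝ) * 128 ≤ ⌊(2 : ℝ) ^ (10 * s)⌋₊ := calc
  (⌊(2 : ℝ) ^ s⌋₊ : ℝ) * 128 ≤ 2 ^ s * 2 ^ (7 : ℝ) := by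
    gcongr; exacts [Nat.floor_le (by positivity), by norm_num]
  _ = 2 ^ (s + 7) := (rpow_add two_pos _ _).symm
  _ ≤ 2 ^ (10 * s - 1) := rpow_le_rpow_of_exponent_le one_le_two (by linarith)
  _ ≤ ⌊(2 : ℝ) ^ (10 * s)⌋₊ := two_rpow_sub_one_le_floor_two_rpow (by linarith)

lemma natCast_le_four_mul_of_floor_two_rpow_pow_le {h : ℕ} (hs : 1 ≤ s)
    (H : (⌊(2 : ℝ) ^ (10 * s)⌋₊ : ℝ) ^ h ≤ 2 ^ (s ^ 2) * 2 ^ h) : (h : ℝ) ≤ 4 * s := by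
  have : (2 : ℝ) ^ ((10 * s - 1) * h) ≤ 2 ^ (s ^ 2 + h) := calc
    (2 : ℝ) ^ ((10 * s - 1) * h) = (2 ^ (10 * s - 1)) ^ h := rpow_mul_natCast zero_le_two _ _
    _ ≤ (⌊(2 : ℝ) ^ (10 * s)⌋₊ : ℝ) ^ h := by
      gcongr; exact two_rpow_sub_one_le_floor_two_rpow (by linarith)
    _ ≤ 2 ^ (s ^ 2 + h) := by rwa [rpow_add two_pos, rpow_natCast]
  have := (rpow_le_rpow_left_iff one_lt_two).1 this
  nlinarith

lemma natCast_le_four_mul_of_pow_le_floor_two_rpow_mul {h : ℕ} (hs : 0 ≤ s)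
    (H : (128 : ℝ) ^ h ≤ ⌊(2 : ℝ) ^ (10 * s)⌋₊ * 2 ^ h) : (h : ℝ) ≤ 4 * s := by
  have : (2 : ℝ) ^ ((7 : ℝ) * h) ≤ 2 ^ (10 * s + h) := calc
    (2 : ℝ) ^ ((7 : ℝ) * h) = 128 ^ h := by rw [rpow_mul_natCast zero_le_two]; norm_num
    _ ≤ ⌊(2 : ℝ) ^ (10 * s)⌋₊ * 2 ^ h := H
    _ ≤ 2 ^ (10 * s) * 2 ^ h := by gcongr; exact Nat.floor_le (by positivity)
    _ = 2 ^ (10 * s + h) := by rw [rpow_add two_pos, rpow_natCast]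
  have := (rpow_le_rpow_left_iff one_lt_two).1 this
  linarith

end twoRpow

theorem hierarchy_depth_bound_general (n : ℕ) (hn : 2 ^ 128 ≤ n)
    (ε : ℝ) (hε0 : 0 < ε) (hε1 : ε < 1)
    (Δmax : ℝ) (hΔn : Δmax ≤ n)
    (h : ℕ) (Δ : ℕ → ℝ)
    (hΔ0 : Δ 0 = Δmax)
    (hrec : ∀ i < h,
      Δ (i + 1) ≤ (1 + ε / (128 * Real.logb 2 n)) * Δ i /
        (if (⌊(2 : ℝ) ^ (10 * Real.sqrt (Real.logb 2 n))⌋₊ : ℝ) *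
              (⌊(2 : ℝ) ^ (Real.sqrt (Real.logb 2 n))⌋₊ : ℝ) ^ i ≤ Δmax
          then (⌊(2 : ℝ) ^ (10 * Real.sqrt (Real.logb 2 n))⌋₊ : ℝ)
          else (⌊Real.logb 2 n / ε⌋₊ : ℝ)))
    (hfin : 1 ≤ Δ h) :
    (h : ℝ) ≤ 4 * Real.sqrt (Real.logb 2 n) := by
  set L := logb 2 n
  set s := √L
  have hn0 : (0 : ℝ) < n := by positivity
  have hL : 128 ≤ L := (le_logb_iff_rpow_le one_lt_two hn0).2 (by exact_mod_cast hn)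
  have hs : 1 ≤ s := one_le_sqrt.2 (by linarith)
  have hn_eq : (n : ℝ) = 2 ^ (s ^ 2) := by
    rw [sq_sqrt (by linarith), rpow_logb two_pos one_lt_two.ne' hn0]
  set c := 1 + ε / (128 * L)
  have hc2 : c ≤ 2 := by linarith [(div_le_one (by positivity)).2 (by linarith : ε ≤ 128 * L)]
  have hT' := one_le_floor_two_rpow (by positivity : 0 ≤ s)
  have hT2 : (128 : ℝ) ≤ ⌊L / ε⌋₊ := by
    have h128 : 128 ≤ ⌊L / ε⌋₊ := Nat.le_floor <| by
      exact_mod_cast hL.trans (le_div_self (by positivity) hε0 hε1.le)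
    exact_mod_cast h128
  have hT'T1 := floor_two_rpow_mul_128_le_floor_two_rpow_ten_mul hs
  set T1 : ℝ := ↑⌊(2 : ℝ) ^ (10 * s)⌋₊
  set T' : ℝ := ↑⌊(2 : ℝ) ^ s⌋₊
  set T2 : ℝ := ↑⌊L / ε⌋₊
  have hprod : ∏ i ∈ range h, splitterParam T1 T2 T' Δmax i ≤ Δmax * c ^ h :=
    (prod_range_le_mul_pow_of_le_mul_div (by positivity)
      (fun i _ => splitterParam_pos (by linarith) (by linarith) i) hrec hfin).trans_eq
      (by rw [hΔ0])
  rcases pow_le_or_pow_le_of_prod_splitterParam_le hT' (by norm_num) hT2 hT'T1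
    (by positivity) hprod with hA | hB
  · exact natCast_le_four_mul_of_floor_two_rpow_pow_le hs (hA.trans (by rw [← hn_eq]; gcongr))
  · exact natCast_le_four_mul_of_pow_le_floor_two_rpow_mul (by positivity) (hB.trans (by gcongr))

/-- The hierarchy-depth bound (Lemma `hbound`): any valid degree-splitting hierarchy built
from `t1`-splitters and `t2`-splitters, in which every level's degree bound shrinks by the
stated factor and the final degree bound is at least `1`, has depth at most `4√(log₂ n)`. -/
theorem hierarchy_depth_bound (n : ℕ) (hn : 2 ^ 128 ≤ n)
    (ε : ℝ) (hε0 : 0 < ε) (hε1 : ε < 1)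
    (Δmax : ℝ) (hΔ1 : 1 ≤ Δmax) (hΔn : Δmax ≤ n)
    (h : ℕ) (Δ : ℕ → ℝ)
    (hΔ0 : Δ 0 = Δmax)
    (hrec : ∀ i < h,
      Δ (i + 1) ≤ (1 + ε / (128 * Real.logb 2 n)) * Δ i /
        (if (⌊(2 : ℝ) ^ (10 * Real.sqrt (Real.logb 2 n))⌋₊ : ℝ) *
              (⌊(2 : ℝ) ^ (Real.sqrt (Real.logb 2 n))⌋₊ : ℝ) ^ i ≤ Δmax
          then (⌊(2 : ℝ) ^ (10 * Real.sqrt (Real.logb 2 n))⌋₊ : ℝ)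
          else (⌊Real.logb 2 n / ε⌋₊ : ℝ)))
    (hfin : 1 ≤ Δ h) :
    (h : ℝ) ≤ 4 * Real.sqrt (Real.logb 2 n) :=
  hierarchy_depth_bound_general n hn ε hε0 hε1 Δmax hΔn h Δ hΔ0 hrec hfin
end
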